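/- arXiv:math/0506015 — 7 statements merged into one kernel-verified Lean document; each statement's English description precedes it below -/
import Mathlib

section
/- Equivariant Pieri–type expansion at fixed points: for all u, v, x ∈ I(d,n), E(u,x) · E(v,x) = Σ_{w ∈ I(d,n)} c_{uv}^w · E(w,x) in K, where for w ≤ u and w ≤ v one sets c_{uv}^w := Σ_{w = y_0 < y_1 < … < y_k} (−1)^k · (E(u,y_k) E(v,y_k) / E(y_k,y_k)) · ∏_{t=1}^{k} (E(y_t, y_{t−1}) / E(y_{t−1}, y_{t−1})), the sum being over all strictly increasing chains w = y_0 < y_1 < … < y_k (k ≥ 0) in I(d,n) with y_k ≤ u and y_k ≤ v, and c_{uv}^w := 0 if not both w ≤ u and w ≤ v. -/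
noncomputable section

/-- The variable `ε_j` of the polynomial ring `ℤ[ε_1, …, ε_n]` (junk value `0`
for `j` outside `{1, …, n}`). -/
def eps (n j : ℕ) : MvPolynomial (Fin n) ℤ :=
  if h : 1 ≤ j ∧ j ≤ n then MvPolynomial.X ⟨j - 1, by omega⟩ else 0

/-- `mu n k r p` is `μ_r^k(p) = ∏_{j=k}^{r} (ε_j − ε_p)`, the empty product
(when `k > r`) being `1`. -/
def mu (n k r p : ℕ) : MvPolynomial (Fin n) ℤ :=
  ∏ j ∈ Finset.Icc k r, (eps n j - eps n p)

/-- The Vandermonde product `VDM(v) = ∏_{1 ≤ i < j ≤ d} (ε_{v_j} − ε_{v_i})`. -/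
def vdm (n d : ℕ) (v : Fin d → ℕ) : MvPolynomial (Fin n) ℤ :=
  ∏ p ∈ Finset.univ.filter (fun p : Fin d × Fin d => p.1 < p.2),
    (eps n (v p.2) - eps n (v p.1))

/-- `D(u,v)`: the determinant of the `d×d` matrix whose `(i,j)`-entry is `μ_n^{u_i+1}(v_j)`. -/
def Ddet (n d : ℕ) (u v : Fin d → ℕ) : MvPolynomial (Fin n) ℤ :=
  Matrix.det (Matrix.of fun i j : Fin d => mu n (u i + 1) n (v j))

/-- `E(u,v) = D(u,v)/VDM(v)`, an element of the fraction field `K` of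
`R = ℤ[ε_1, …, ε_n]`. -/
def Efn (n d : ℕ) (u v : Fin d → ℕ) : FractionRing (MvPolynomial (Fin n) ℤ) :=
  algebraMap (MvPolynomial (Fin n) ℤ) (FractionRing (MvPolynomial (Fin n) ℤ)) (Ddet n d u v)
    / algebraMap (MvPolynomial (Fin n) ℤ) (FractionRing (MvPolynomial (Fin n) ℤ)) (vdm n d v)

attribute [local instance] Classical.propDecidable

/-- The set `I(d,n)` of strictly increasing `d`-tuples of integers from `{1, …, n}`,
encoded with values in `Fin (n+1)` (via the natural-number values of the entries). -/
def Idn (d n : ℕ) : Type :=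
  {w : Fin d → Fin (n + 1) // StrictMono w ∧ ∀ i, 1 ≤ (w i : ℕ)}

noncomputable instance (d n : ℕ) : Fintype (Idn d n) := by
  unfold Idn; infer_instance

/-- The componentwise partial order on `I(d,n)`: `a ≤ b` iff `a_i ≤ b_i` for all `i`. -/
def leI {d n : ℕ} (a b : Idn d n) : Prop := ∀ i, (a.1 i : ℕ) ≤ (b.1 i : ℕ)

/-- `E(u,v) = D(u,v)/VDM(v) ∈ K` for `u, v ∈ I(d,n)`. -/
def EI {d n : ℕ} (a b : Idn d n) : FractionRing (MvPolynomial (Fin n) ℤ) :=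
  Efn n d (fun i => (a.1 i : ℕ)) (fun i => (b.1 i : ℕ))

/-- The set of strictly increasing chains `w = y_0 < y_1 < … < y_k` (`k ≥ 0`) in `I(d,n)`
with `y_k ≤ u` and `y_k ≤ v`, encoded as lists `[y_0, y_1, …, y_k]`. -/
def chainSet {d n : ℕ} (w u v : Idn d n) : Set (List (Idn d n)) :=
  {L | L.head? = some w ∧ L.Chain' (fun a b => leI a b ∧ a ≠ b) ∧
    leI (L.getLast?.getD w) u ∧ leI (L.getLast?.getD w) v}

/-- The contribution `(−1)^k · (E(u,y_k) E(v,y_k) / E(y_k,y_k)) ·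
∏_{t=1}^{k} (E(y_t, y_{t−1}) / E(y_{t−1}, y_{t−1}))` of a chain `[y_0, …, y_k]`. -/
def chainTerm {d n : ℕ} (u v w : Idn d n) (L : List (Idn d n)) :
    FractionRing (MvPolynomial (Fin n) ℤ) :=
  (-1) ^ (L.length - 1)
    * (EI u (L.getLast?.getD w) * EI v (L.getLast?.getD w) / EI (L.getLast?.getD w) (L.getLast?.getD w))
    * ((L.zip L.tail).map (fun p => EI p.2 p.1 / EI p.1 p.1)).prod

/-- The structure constant `c_{uv}^w`: the sum of `chainTerm` over all chains starting
at `w` and lying below both `u` and `v`, when `w ≤ u` and `w ≤ v`; and `0` otherwise.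
(There are only finitely many such chains, the poset `I(d,n)` being finite.) -/
noncomputable def cConst {d n : ℕ} (u v w : Idn d n) :
    FractionRing (MvPolynomial (Fin n) ℤ) :=
  if leI w u ∧ leI w v then ∑ᶠ L ∈ chainSet w u v, chainTerm u v w L else 0

/-!
`E` is triangular for the componentwise order with nonzero diagonal: `E(a,b) = 0` unless
`b ≤ a`, and `E(y,y) ≠ 0` since `D(y,y)` is the determinant of a triangular matrix with nonzero
diagonal. Splitting a chain from `w` according to its second element gives, for `w ≤ u, v`,
the recursion `c_{uv}^w E(w,w) = E(u,w) E(v,w) - Σ_{y > w} c_{uv}^y E(y,w)`, which by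
triangularity is the claimed identity at `x = w`. If `x` is not below both `u` and `v`, both
sides vanish.
-/

section Pieri

variable {d n : ℕ}

lemma Fin.exists_le_and_perm_apply_le (σ : Equiv.Perm (Fin d)) (i : Fin d) :
    ∃ j, i ≤ j ∧ σ j ≤ i := by
  by_contra! h
  have hcard := Finset.card_le_card_of_injOn σ
    (fun j hj => Finset.mem_Ioi.mpr (h j (Finset.mem_Ici.mp hj))) σ.injective.injOn
  rw [Fin.card_Ici, Fin.card_Ioi] at hcard
  omega

lemma List.IsChain.le_getLast?_getD {α : Type*} [Preorder α] {a : α} {l : List α}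
    (h : (a :: l).IsChain (· < ·)) : a ≤ l.getLast?.getD a := by
  induction l generalizing a with
  | nil => exact le_rfl
  | cons b l ih =>
    obtain ⟨hab, hl⟩ := List.isChain_cons_cons.mp h
    simpa [List.getLast?_cons] using hab.le.trans (ih hl)

lemma eps_eq_X {j : ℕ} (h₁ : 1 ≤ j) (h₂ : j ≤ n) :
    eps n j = MvPolynomial.X (⟨j - 1, by omega⟩ : Fin n) := by
  rw [eps, dif_pos ⟨h₁, h₂⟩]

lemma eps_sub_eps_ne_zero {j p : ℕ} (hj₁ : 1 ≤ j) (hj₂ : j ≤ n) (hp₁ : 1 ≤ p) (hp₂ : p ≤ n)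
    (hne : j ≠ p) : eps n j - eps n p ≠ 0 := by
  rw [eps_eq_X hj₁ hj₂, eps_eq_X hp₁ hp₂, sub_ne_zero]
  intro h
  have := congrArg Fin.val (MvPolynomial.X_injective h)
  simp only at this
  omega

lemma mu_eq_zero_of_le {k p : ℕ} (hkp : k ≤ p) (hpn : p ≤ n) : mu n k n p = 0 :=
  Finset.prod_eq_zero (Finset.mem_Icc.mpr ⟨hkp, hpn⟩) (sub_self _)

lemma mu_ne_zero_of_lt {k p : ℕ} (hp : 1 ≤ p) (hpk : p < k) : mu n k n p ≠ 0 :=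
  Finset.prod_ne_zero_iff.mpr fun j hj =>
    have hj := Finset.mem_Icc.mp hj
    eps_sub_eps_ne_zero (by omega) hj.2 hp (by omega) (by omega)

lemma leI_antisymm {a b : Idn d n} (hab : leI a b) (hba : leI b a) : a = b :=
  Subtype.ext <| funext fun i => Fin.ext <| (hab i).antisymm (hba i)

/-- The strict order is `leI a b ∧ a ≠ b`, so that the chains of `chainSet` are `<`-chains. -/
instance : PartialOrder (Idn d n) where
  le := leI
  lt a b := leI a b ∧ a ≠ b
  le_refl _ _ := le_rfl
  le_trans _ _ _ hab hbc i := (hab i).trans (hbc i)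
  le_antisymm _ _ := leI_antisymm
  lt_iff_le_not_ge _ _ := and_congr_right fun hab =>
    not_congr ⟨fun h => h ▸ fun _ => le_rfl, leI_antisymm hab⟩

instance : LocallyFiniteOrderTop (Idn d n) where
  finsetIoi a := Finset.univ.filter (a < ·)
  finsetIci a := Finset.univ.filter (a ≤ ·)
  finset_mem_Ici _ _ := by simp
  finset_mem_Ioi _ _ := by simp

namespace Idn

lemma le_def {a b : Idn d n} : a ≤ b ↔ ∀ i, (a.1 i : ℕ) ≤ (b.1 i : ℕ) := Iff.rfl

lemma val_le (a : Idn d n) (i : Fin d) : (a.1 i : ℕ) ≤ n :=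
  Nat.lt_succ_iff.mp (a.1 i).isLt

lemma val_lt_val (a : Idn d n) {i j : Fin d} (hij : i < j) : (a.1 i : ℕ) < (a.1 j : ℕ) :=
  a.2.1 hij

lemma val_le_val (a : Idn d n) {i j : Fin d} (hij : i ≤ j) : (a.1 i : ℕ) ≤ (a.1 j : ℕ) :=
  a.2.1.monotone hij

end Idn

lemma Ddet_eq_zero_of_not_le_s2 {a b : Idn d n} (h : ¬ b ≤ a) :
    Ddet n d (fun i => (a.1 i : ℕ)) (fun i => (b.1 i : ℕ)) = 0 := by
  obtain ⟨k, hk⟩ : ∃ k, (a.1 k : ℕ) < (b.1 k : ℕ) := by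
    simpa [Idn.le_def] using h
  rw [Ddet, Matrix.det_apply']
  refine Finset.sum_eq_zero fun σ _ => ?_
  -- every permutation meets the zero block of rows `≤ k` and columns `≥ k`
  obtain ⟨j, hkj, hσj⟩ := Fin.exists_le_and_perm_apply_le σ k
  have hzero : mu n ((a.1 (σ j) : ℕ) + 1) n (b.1 j : ℕ) = 0 :=
    mu_eq_zero_of_le (by linarith [a.val_le_val hσj, b.val_le_val hkj]) (b.val_le j)
  exact mul_eq_zero_of_right _ (Finset.prod_eq_zero (Finset.mem_univ j) hzero)

lemma Ddet_self_ne_zero (y : Idn d n) :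
    Ddet n d (fun i => (y.1 i : ℕ)) (fun i => (y.1 i : ℕ)) ≠ 0 := by
  rw [Ddet, Matrix.det_of_isLowerTriangular]
  · exact Finset.prod_ne_zero_iff.mpr fun i _ => mu_ne_zero_of_lt (y.2.2 i) (Nat.lt_succ_self _)
  · exact fun i j (hij : i < j) => mu_eq_zero_of_le (y.val_lt_val hij) (y.val_le j)

lemma vdm_ne_zero (y : Idn d n) : vdm n d (fun i => (y.1 i : ℕ)) ≠ 0 :=
  Finset.prod_ne_zero_iff.mpr fun p hp =>
    eps_sub_eps_ne_zero (y.2.2 p.2) (y.val_le p.2) (y.2.2 p.1) (y.val_le p.1)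
      (y.val_lt_val (Finset.mem_filter.mp hp).2).ne'

lemma EI_eq_zero_of_not_le {a b : Idn d n} (h : ¬ b ≤ a) : EI a b = 0 := by
  rw [EI, Efn, Ddet_eq_zero_of_not_le_s2 h, map_zero, zero_div]

lemma EI_self_ne_zero (y : Idn d n) : EI y y ≠ 0 :=
  div_ne_zero (IsFractionRing.to_map_eq_zero_iff.not.mpr (Ddet_self_ne_zero y))
    (IsFractionRing.to_map_eq_zero_iff.not.mpr (vdm_ne_zero y))

lemma chainSet_finite (w u v : Idn d n) : (chainSet w u v).Finite :=
  (List.finite_length_le (Idn d n) (Fintype.card (Idn d n))).subset fun _ hL =>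
    List.Nodup.length_le_card ((List.isChain_iff_pairwise.mp hL.2.1).imp fun h => h.2)

lemma le_of_mem_chainSet {w u v : Idn d n} {L : List (Idn d n)} (hL : L ∈ chainSet w u v) :
    w ≤ u ∧ w ≤ v := by
  obtain ⟨hhead, hchain, hu, hv⟩ := hL
  obtain ⟨M, rfl⟩ := List.head?_eq_some_iff.mp hhead
  have hw : w ≤ M.getLast?.getD w := List.IsChain.le_getLast?_getD hchain
  simp only [List.getLast?_cons, Option.getD_some] at hu hv
  exact ⟨hw.trans hu, hw.trans hv⟩

lemma cConst_eq_finsum (u v w : Idn d n) :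
    cConst u v w = ∑ᶠ L ∈ chainSet w u v, chainTerm u v w L := by
  rw [cConst]
  split_ifs with h
  · rfl
  · exact (finsum_mem_of_eqOn_zero fun L hL => absurd (le_of_mem_chainSet hL) h).symm

lemma chainSet_eq_insert {w u v : Idn d n} (hu : w ≤ u) (hv : w ≤ v) :
    chainSet w u v =
      insert [w] (⋃ y ∈ (Finset.Ioi w : Set (Idn d n)), List.cons w '' chainSet y u v) := by
  ext L
  simp only [Set.mem_insert_iff, Set.mem_iUnion, Set.mem_image, Finset.mem_coe, Finset.mem_Ioi]
  constructor
  · rintro ⟨hhead, hchain, hlu, hlv⟩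
    obtain ⟨M, rfl⟩ := List.head?_eq_some_iff.mp hhead
    cases M with
    | nil => exact Or.inl rfl
    | cons y M =>
      obtain ⟨hwy, hM⟩ := List.isChain_cons_cons.mp hchain
      refine Or.inr ⟨y, hwy, y :: M, ⟨rfl, hM, ?_, ?_⟩, rfl⟩
      · simpa [List.getLast?_cons] using hlu
      · simpa [List.getLast?_cons] using hlv
  · rintro (rfl | ⟨y, hwy, M, ⟨hhead, hM, hmu, hmv⟩, rfl⟩)
    · exact ⟨rfl, List.isChain_singleton w, hu, hv⟩
    · obtain ⟨M, rfl⟩ := List.head?_eq_some_iff.mp hhead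
      refine ⟨rfl, List.isChain_cons_cons.mpr ⟨hwy, hM⟩, ?_, ?_⟩
      · simpa [List.getLast?_cons] using hmu
      · simpa [List.getLast?_cons] using hmv

lemma chainTerm_singleton (u v w : Idn d n) :
    chainTerm u v w [w] = EI u w * EI v w / EI w w := by
  simp [chainTerm]

lemma chainTerm_cons (u v w : Idn d n) {y : Idn d n} {M : List (Idn d n)}
    (hM : M.head? = some y) :
    chainTerm u v w (w :: M) = -(EI y w / EI w w) * chainTerm u v y M := by
  obtain ⟨M, rfl⟩ := List.head?_eq_some_iff.mp hM
  simp [chainTerm, List.getLast?_cons, pow_succ]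
  ring

lemma cConst_eq_div {u v w : Idn d n} (hu : w ≤ u) (hv : w ≤ v) :
    cConst u v w =
      (EI u w * EI v w - ∑ y ∈ Finset.Ioi w, cConst u v y * EI y w) / EI w w := by
  have hsingleton : [w] ∉ ⋃ y ∈ (Finset.Ioi w : Set (Idn d n)), List.cons w '' chainSet y u v := by
    simp only [Set.mem_iUnion, Set.mem_image, not_exists, not_and]
    rintro y - M hM hwM
    obtain rfl := List.cons_injective hwM
    exact absurd hM.1 (by simp)
  have hdisj : (Finset.Ioi w : Set (Idn d n)).PairwiseDisjoint
      fun y => List.cons w '' chainSet y u v := by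
    rintro y - y' - hyy'
    refine Set.disjoint_left.mpr ?_
    rintro L ⟨M, hM, rfl⟩ ⟨M', hM', hMM'⟩
    exact hyy' (Option.some.inj (hM.1.symm.trans (List.cons_injective hMM' ▸ hM'.1)))
  have hfin : ∀ y ∈ (Finset.Ioi w : Set (Idn d n)), (List.cons w '' chainSet y u v).Finite :=
    fun y _ => (chainSet_finite y u v).image _
  rw [cConst_eq_finsum, chainSet_eq_insert hu hv,
    finsum_mem_insert _ hsingleton ((Finset.finite_toSet _).biUnion hfin),
    finsum_mem_biUnion hdisj (Finset.finite_toSet _) hfin,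
    finsum_mem_coe_finset, chainTerm_singleton, sub_div, Finset.sum_div, sub_eq_add_neg,
    ← Finset.sum_neg_distrib]
  congr 1
  refine Finset.sum_congr rfl fun y _ => ?_
  rw [finsum_mem_image List.cons_injective.injOn,
    finsum_mem_congr rfl fun M hM => chainTerm_cons u v w hM.1, ← mul_finsum_mem,
    ← cConst_eq_finsum]
  ring

lemma cConst_eq_zero {u v w : Idn d n} (h : ¬ (w ≤ u ∧ w ≤ v)) : cConst u v w = 0 :=
  if_neg h

end Pieri

theorem pieri_expansion_at_fixed_points_general (d n : ℕ) (u v x : Idn d n) :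
    EI u x * EI v x = ∑ w : Idn d n, cConst u v w * EI w x := by
  have hsum_Ici : ∑ w, cConst u v w * EI w x = ∑ w ∈ Finset.Ici x, cConst u v w * EI w x :=
    (Finset.sum_subset (Finset.subset_univ _) fun w _ hw => by
      rw [EI_eq_zero_of_not_le (by simpa using hw), mul_zero]).symm
  by_cases hx : x ≤ u ∧ x ≤ v
  · rw [hsum_Ici, ← Finset.add_sum_Ioi_eq_sum_Ici, cConst_eq_div hx.1 hx.2,
      div_mul_cancel₀ _ (EI_self_ne_zero x), sub_add_cancel]
  · have hf : EI u x * EI v x = 0 := by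
      rcases not_and_or.mp hx with h | h <;> simp [EI_eq_zero_of_not_le h]
    rw [hf, hsum_Ici]
    refine (Finset.sum_eq_zero fun w hw => ?_).symm
    have hxw : x ≤ w := Finset.mem_Ici.mp hw
    rw [cConst_eq_zero fun h => hx ⟨hxw.trans h.1, hxw.trans h.2⟩, zero_mul]

/-- Equivariant Pieri-type expansion at fixed points: for all `u, v, x ∈ I(d,n)`,
`E(u,x) · E(v,x) = Σ_{w ∈ I(d,n)} c_{uv}^w · E(w,x)` in `K`. -/
theorem pieri_expansion_at_fixed_points (d n : ℕ) (hd : 1 ≤ d) (hdn : d ≤ n)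
    (u v x : Idn d n) :
    EI u x * EI v x = ∑ w : Idn d n, cConst u v w * EI w x :=
  pieri_expansion_at_fixed_points_general d n u v x
end
end

section
/- Alternating-sum identity for complete homogeneous symmetric polynomials and μ-products: for integers a, b, j with 1 ≤ b ≤ n, 1 ≤ j ≤ a ≤ n, one has Σ_{k=0}^{j−1} (−1)^k h_k(ε_{a−j+1+k}, ε_{a−j+2+k}, …, ε_a) · μ_n^{a−j+k+2}(b) = (−ε_b)^{j−1} · μ_n^{a+1}(b) in R. -/
noncomputable section

/-- `hh k l` is the complete homogeneous symmetric polynomial of degree `k`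
in the elements of the list `l`, i.e. the sum of all monomials of degree `k`
in those elements (`hh 0 l = 1`). -/
def hh {A : Type*} [CommRing A] : ℕ → List A → A
  | 0, _ => 1
  | _ + 1, [] => 0
  | k + 1, x :: xs => x * hh k (x :: xs) + hh (k + 1) xs
  termination_by k l => (l.length, k)

lemma hh_zero {A : Type*} [CommRing A] (l : List A) : hh 0 l = 1 := by rw [hh]

lemma hh_succ_nil {A : Type*} [CommRing A] (k : ℕ) : hh (k+1) ([] : List A) = 0 := by rw [hh]

lemma hh_succ_cons {A : Type*} [CommRing A] (k : ℕ) (x : A) (xs : List A) :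
    hh (k+1) (x :: xs) = x * hh k (x :: xs) + hh (k+1) xs := by rw [hh]

lemma mu_succ (n t b : ℕ) (ht : t ≤ n) :
    mu n t n b = (eps n t - eps n b) * mu n (t+1) n b := by
  unfold mu
  rw [show Finset.Icc t n = insert t (Finset.Icc (t+1) n) from by
        ext x; simp only [Finset.mem_Icc, Finset.mem_insert]; omega,
      Finset.prod_insert (by simp only [Finset.mem_Icc]; omega)]

lemma step (n b m j : ℕ) (hj : 1 ≤ j) (hmn : m + j + 1 ≤ n) :
    (∑ k ∈ Finset.range (j+1),
        (-1 : MvPolynomial (Fin n) ℤ) ^ k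
          * hh k ((List.range' (m+1+k) (j+1-k)).map (eps n))
          * mu n (m+k+2) n b)
    = (-(eps n b)) * ∑ k ∈ Finset.range j,
        (-1 : MvPolynomial (Fin n) ℤ) ^ k
          * hh k ((List.range' (m+1+1+k) (j-k)).map (eps n))
          * mu n (m+1+k+2) n b := by
  simp only [Finset.sum_range_succ']
  have key : ∀ k ∈ Finset.range j,
      (-1 : MvPolynomial (Fin n) ℤ) ^ (k+1)
          * hh (k+1) ((List.range' (m+1+(k+1)) (j+1-(k+1))).map (eps n))
          * mu n (m+(k+1)+2) n b
      = ((-1 : MvPolynomial (Fin n) ℤ) ^ (k+1)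
            * hh (k+1) ((List.range' (m+2+(k+1)) (j-(k+1))).map (eps n))
            * mu n (m+(k+1)+2) n b
          - (-1 : MvPolynomial (Fin n) ℤ) ^ k
            * hh k ((List.range' (m+2+k) (j-k)).map (eps n))
            * mu n (m+k+2) n b)
        + (-(eps n b)) * ((-1 : MvPolynomial (Fin n) ℤ) ^ k
            * hh k ((List.range' (m+1+1+k) (j-k)).map (eps n))
            * mu n (m+1+k+2) n b) := by
    intro k hk
    rw [Finset.mem_range] at hk
    obtain ⟨d, rfl⟩ : ∃ d, j = k + d + 1 := ⟨j - k - 1, by omega⟩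
    simp only [show k+d+1+1-(k+1) = d+1 from by omega,
               show k+d+1-(k+1) = d from by omega,
               show k+d+1-k = d+1 from by omega,
               show m+1+(k+1) = m+k+2 from by omega,
               show m+(k+1)+2 = m+k+3 from by omega,
               show m+2+(k+1) = m+k+3 from by omega,
               show m+2+k = m+k+2 from by omega,
               show m+1+1+k = m+k+2 from by omega,
               show m+1+k+2 = m+k+3 from by omega]
    rw [List.range'_succ, List.map_cons]
    simp only [show m+k+2+1 = m+k+3 from by omega]
    rw [hh_succ_cons, mu_succ n (m+k+2) b (by omega)]
    simp only [show m+k+2+1 = m+k+3 from by omega]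
    ring
  rw [Finset.sum_congr rfl key, Finset.sum_add_distrib]
  have tele : ∑ k ∈ Finset.range j,
      ((-1 : MvPolynomial (Fin n) ℤ) ^ (k+1)
          * hh (k+1) ((List.range' (m+2+(k+1)) (j-(k+1))).map (eps n))
          * mu n (m+(k+1)+2) n b
        - (-1 : MvPolynomial (Fin n) ℤ) ^ k
          * hh k ((List.range' (m+2+k) (j-k)).map (eps n))
          * mu n (m+k+2) n b)
      = (-1 : MvPolynomial (Fin n) ℤ) ^ j
          * hh j ((List.range' (m+2+j) (j-j)).map (eps n))
          * mu n (m+j+2) n b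
        - (-1 : MvPolynomial (Fin n) ℤ) ^ 0
          * hh 0 ((List.range' (m+2+0) (j-0)).map (eps n))
          * mu n (m+0+2) n b :=
    Finset.sum_range_sub (fun k => (-1 : MvPolynomial (Fin n) ℤ) ^ k
          * hh k ((List.range' (m+2+k) (j-k)).map (eps n))
          * mu n (m+k+2) n b) j
  rw [tele, ← Finset.mul_sum]
  have hzero : hh j ((List.range' (m+2+j) (j-j)).map (eps n))
      = (0 : MvPolynomial (Fin n) ℤ) := by
    obtain ⟨i, rfl⟩ : ∃ i, j = i + 1 := ⟨j - 1, by omega⟩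
    rw [Nat.sub_self]
    simp [hh_succ_nil]
  rw [hzero]
  simp only [hh_zero]
  ring

/-- Alternating-sum identity for complete homogeneous symmetric polynomials and
`μ`-products: for integers `a, b, j` with `1 ≤ b ≤ n`, `1 ≤ j ≤ a ≤ n`,
`Σ_{k=0}^{j−1} (−1)^k h_k(ε_{a−j+1+k}, …, ε_a) · μ_n^{a−j+k+2}(b) = (−ε_b)^{j−1} · μ_n^{a+1}(b)`
in `R = ℤ[ε_1, …, ε_n]`.  (The list `[a−j+1+k, …, a]` has `j−k` entries.) -/
theorem h_mu_alternating_sum (n a b j : ℕ)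
    (hb1 : 1 ≤ b) (hbn : b ≤ n) (hj1 : 1 ≤ j) (hja : j ≤ a) (han : a ≤ n) :
    ∑ k ∈ Finset.range j,
        (-1 : MvPolynomial (Fin n) ℤ) ^ k
          * hh k ((List.range' (a - j + 1 + k) (j - k)).map (eps n))
          * mu n (a - j + k + 2) n b
      = (-(eps n b)) ^ (j - 1) * mu n (a + 1) n b := by
  revert hj1 hja
  induction j with
  | zero => intro h _; exact absurd h (by omega)
  | succ j ih =>
    intro _ hja
    rcases Nat.eq_zero_or_pos j with rfl | hj
    · rw [Finset.sum_range_one]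
      simp only [hh_zero, pow_zero, one_mul, mul_one,
        show a - 1 + 0 + 2 = a + 1 from by omega,
        show (0:ℕ) + 1 - 1 = 0 from rfl]
    · have hIH := ih hj (by omega)
      obtain ⟨m, rfl⟩ : ∃ m, a = m + j + 1 := ⟨a - j - 1, by omega⟩
      simp only [show m+j+1-(j+1) = m from by omega] 
      rw [step n b m j hj (by omega)]
      simp only [show m+j+1-j = m+1 from by omega] at hIH
      rw [hIH]
      rw [show (-(eps n b)) ^ (j+1-1) = -(eps n b) * (-(eps n b)) ^ (j-1) from by
            rw [show j+1-1 = (j-1)+1 from by omega, pow_succ']]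
      ring
end
end

section
/- Partial alternating-sum identity for complete homogeneous symmetric polynomials and μ-products: for integers a, b, j, m with 1 ≤ b ≤ n, 1 ≤ j ≤ a ≤ n and 0 ≤ m ≤ j−1, one has Σ_{k=0}^{m} (−1)^k h_k(ε_{a−j+1+k}, ε_{a−j+2+k}, …, ε_a) · μ_n^{a−j+k+2}(b) = (−1)^m h_m(ε_b, ε_{a−j+2+m}, ε_{a−j+3+m}, …, ε_a) · μ_n^{a−j+m+2}(b) in R. -/
noncomputable section

lemma hh_cons {A : Type*} [CommRing A] (k : ℕ) (x : A) (xs : List A) :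
    hh (k + 1) (x :: xs) = x * hh k (x :: xs) + hh (k + 1) xs := by
  rw [hh]

lemma hh_key {A : Type*} [CommRing A] (m : ℕ) (x y : A) (l : List A) :
    (x - y) * hh m (y :: x :: l) = x * hh m (x :: l) - y * hh m (y :: l) := by
  induction m with
  | zero => simp only [hh_zero]; ring
  | succ m ih =>
      rw [hh_cons m y (x :: l), hh_cons m x l, hh_cons m y l]
      linear_combination y * ih

lemma mu_split (n k p : ℕ) (h : k ≤ n) :
    mu n k n p = (eps n k - eps n p) * mu n (k + 1) n p := by
  unfold mu
  rw [← Finset.Ico_add_one_right_eq_Icc, Finset.prod_eq_prod_Ico_succ_bot (by omega),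
    Finset.Ico_add_one_right_eq_Icc]

/-- Partial alternating-sum identity for complete homogeneous symmetric polynomials and
`μ`-products: for integers `a, b, j, m` with `1 ≤ b ≤ n`, `1 ≤ j ≤ a ≤ n`, `0 ≤ m ≤ j−1`,
`Σ_{k=0}^{m} (−1)^k h_k(ε_{a−j+1+k}, …, ε_a) · μ_n^{a−j+k+2}(b)
  = (−1)^m h_m(ε_b, ε_{a−j+2+m}, …, ε_a) · μ_n^{a−j+m+2}(b)` in `R = ℤ[ε_1, …, ε_n]`. -/
theorem h_mu_partial_alternating_sum (n a b j m : ℕ)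
    (hb1 : 1 ≤ b) (hbn : b ≤ n) (hj1 : 1 ≤ j) (hja : j ≤ a) (han : a ≤ n)
    (hm : m ≤ j - 1) :
    ∑ k ∈ Finset.range (m + 1),
        (-1 : MvPolynomial (Fin n) ℤ) ^ k
          * hh k ((List.range' (a - j + 1 + k) (j - k)).map (eps n))
          * mu n (a - j + k + 2) n b
      = (-1 : MvPolynomial (Fin n) ℤ) ^ m
          * hh m (eps n b :: (List.range' (a - j + 2 + m) (j - 1 - m)).map (eps n))
          * mu n (a - j + m + 2) n b := by
  induction m with
  | zero => simp [hh_zero]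
  | succ m ih =>
      have hm' : m ≤ j - 1 := by omega
      rw [Finset.sum_range_succ, ih hm']
      have l1 : List.range' (a - j + 1 + (m + 1)) (j - (m + 1))
          = (a - j + m + 2) :: List.range' (a - j + m + 3) (j - m - 2) := by
        rw [show a - j + 1 + (m + 1) = a - j + m + 2 by omega,
          show j - (m + 1) = (j - m - 2) + 1 by omega, List.range'_succ,
          show a - j + m + 2 + 1 = a - j + m + 3 by omega]
      have l2 : List.range' (a - j + 2 + m) (j - 1 - m)
          = (a - j + m + 2) :: List.range' (a - j + m + 3) (j - m - 2) := by
        rw [show a - j + 2 + m = a - j + m + 2 by omega,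
          show j - 1 - m = (j - m - 2) + 1 by omega, List.range'_succ,
          show a - j + m + 2 + 1 = a - j + m + 3 by omega]
      have l3 : List.range' (a - j + 2 + (m + 1)) (j - 1 - (m + 1))
          = List.range' (a - j + m + 3) (j - m - 2) := by
        rw [show a - j + 2 + (m + 1) = a - j + m + 3 by omega,
          show j - 1 - (m + 1) = j - m - 2 by omega]
      rw [l1, l2, l3, show a - j + (m + 1) + 2 = a - j + m + 3 by omega]
      set x := eps n (a - j + m + 2) with hx
      set y := eps n b with hy
      set L := (List.range' (a - j + m + 3) (j - m - 2)).map (eps n) with hL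
      have hμ : mu n (a - j + m + 2) n b = (x - y) * mu n (a - j + m + 3) n b := by
        rw [mu_split n (a - j + m + 2) b (by omega),
          show a - j + m + 2 + 1 = a - j + m + 3 by omega]
      rw [hμ]
      set μ := mu n (a - j + m + 3) n b with hμ'
      have key := hh_key m x y L
      simp only [List.map_cons]
      rw [hh_cons m x L, hh_cons m y L, pow_succ]
      linear_combination ((-1 : MvPolynomial (Fin n) ℤ) ^ m * μ) * key
end
end

section
/- Reduction of the restriction determinant to size d−1: let d ≥ 2 and u, v ∈ I(d,n). For 1 ≤ i, j ≤ d−1 define A_{ij} := Σ_{ℓ=u_i+1}^{u_d} μ_{ℓ−1}^{u_i+1}(v_d) · μ_{u_d}^{ℓ+1}(v_j) ∈ R (this polynomial satisfies (ε_{v_d} − ε_{v_j}) · A_{ij} = μ_{u_d}^{u_i+1}(v_j) − μ_{u_d}^{u_i+1}(v_d)). Then D(u,v) = ( ∏_{j=1}^{d} μ_n^{u_d+1}(v_j) ) · det((A_{ij})_{1≤i,j≤d−1}) · ∏_{j=1}^{d−1} (ε_{v_d} − ε_{v_j}). -/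
noncomputable section

lemma mu_empty (n k r p : ℕ) (h : r < k) : mu n k r p = 1 := by
  unfold mu
  rw [Finset.Icc_eq_empty (by omega), Finset.prod_empty]

lemma mu_self (n k p : ℕ) : mu n k k p = eps n k - eps n p := by
  unfold mu
  rw [Finset.Icc_self, Finset.prod_singleton]

lemma mu_succ_top (n k r p : ℕ) (h : k ≤ r + 1) :
    mu n k (r + 1) p = mu n k r p * (eps n (r + 1) - eps n p) := by
  unfold mu
  rw [Finset.prod_Icc_succ_top h]

lemma mu_split_s11 (n k m r p : ℕ) (hk : 1 ≤ k) (h1 : k ≤ m + 1) (h2 : m ≤ r) :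
    mu n k r p = mu n k m p * mu n (m + 1) r p := by
  obtain ⟨k', rfl⟩ : ∃ k', k = k' + 1 := ⟨k - 1, by omega⟩
  unfold mu
  rw [Finset.Icc_add_one_left_eq_Ioc, Finset.Icc_add_one_left_eq_Ioc, Finset.Icc_add_one_left_eq_Ioc,
    Finset.prod_Ioc_consecutive _ (by omega : k' ≤ m) h2]

lemma key (n k m a b : ℕ) (hk : 1 ≤ k) :
    (eps n a - eps n b) *
      ∑ l ∈ Finset.Icc k m, mu n k (l - 1) a * mu n (l + 1) m b
    = mu n k m b - mu n k m a := by
  rcases lt_or_ge m k with h | h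
  · rw [Finset.Icc_eq_empty (by omega), Finset.sum_empty, mul_zero,
      mu_empty n k m b h, mu_empty n k m a h, sub_self]
  · induction m, h using Nat.le_induction with
    | base =>
      rw [Finset.Icc_self, Finset.sum_singleton,
        mu_empty n k (k - 1) a (by omega), mu_empty n (k + 1) k b (by omega),
        mu_self, mu_self]
      ring
    | succ m hm ih =>
      rw [Finset.sum_Icc_succ_top (by omega)]
      have hcongr : ∀ l ∈ Finset.Icc k m,
          mu n k (l - 1) a * mu n (l + 1) (m + 1) b
          = mu n k (l - 1) a * mu n (l + 1) m b * (eps n (m + 1) - eps n b) := by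
        intro l hl
        rw [Finset.mem_Icc] at hl
        rw [mu_succ_top n (l + 1) m b (by omega)]
        ring
      rw [Finset.sum_congr rfl hcongr, ← Finset.sum_mul]
      have h1 : m + 1 - 1 = m := by omega
      rw [h1, mu_empty n (m + 1 + 1) (m + 1) b (by omega),
        mu_succ_top n k m b (by omega), mu_succ_top n k m a (by omega)]
      linear_combination (eps n (m + 1) - eps n b) * ih

/-- Reduction of the restriction determinant to size `d−1`: let `2 ≤ d ≤ n` and
`u, v ∈ I(d,n)`.  For `1 ≤ i, j ≤ d−1` let
`A_{ij} := Σ_{ℓ=u_i+1}^{u_d} μ_{ℓ−1}^{u_i+1}(v_d) · μ_{u_d}^{ℓ+1}(v_j)`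
(this polynomial satisfies `(ε_{v_d} − ε_{v_j}) · A_{ij} = μ_{u_d}^{u_i+1}(v_j) − μ_{u_d}^{u_i+1}(v_d)`).
Then `D(u,v) = (∏_{j=1}^{d} μ_n^{u_d+1}(v_j)) · det(A) · ∏_{j=1}^{d−1} (ε_{v_d} − ε_{v_j})`. -/
theorem Ddet_reduction (n d : ℕ) (hd : 2 ≤ d) (hdn : d ≤ n)
    (u v : Fin d → ℕ)
    (hu : StrictMono u) (hu1 : ∀ i, 1 ≤ u i) (hun : ∀ i, u i ≤ n)
    (hv : StrictMono v) (hv1 : ∀ i, 1 ≤ v i) (hvn : ∀ i, v i ≤ n)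
    (last : Fin d) (hlast : (last : ℕ) = d - 1)
    (em : Fin (d - 1) → Fin d) (hem : ∀ i, (em i : ℕ) = (i : ℕ))
    (A : Matrix (Fin (d - 1)) (Fin (d - 1)) (MvPolynomial (Fin n) ℤ))
    (hA : ∀ i j, A i j =
      ∑ l ∈ Finset.Icc (u (em i) + 1) (u last),
        mu n (u (em i) + 1) (l - 1) (v last) * mu n (l + 1) (u last) (v (em j))) :
    (∀ i j, (eps n (v last) - eps n (v (em j))) * A i j
        = mu n (u (em i) + 1) (u last) (v (em j)) - mu n (u (em i) + 1) (u last) (v last)) ∧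
    Ddet n d u v
      = (∏ j : Fin d, mu n (u last + 1) n (v j)) * Matrix.det A
          * ∏ j : Fin (d - 1), (eps n (v last) - eps n (v (em j))) := by
  have part1 : ∀ i j, (eps n (v last) - eps n (v (em j))) * A i j
      = mu n (u (em i) + 1) (u last) (v (em j)) - mu n (u (em i) + 1) (u last) (v last) := by
    intro i j
    rw [hA]
    exact key n (u (em i) + 1) (u last) (v last) (v (em j)) (by omega)
  refine ⟨part1, ?_⟩
  -- the matrix of partial products
  set B : Matrix (Fin d) (Fin d) (MvPolynomial (Fin n) ℤ) :=
    Matrix.of fun i j => mu n (u i + 1) (u last) (v j) with hB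
  have hile : ∀ i : Fin d, u i ≤ u last := fun i =>
    hu.monotone (by rw [Fin.le_def, hlast]; omega)
  -- Step 1: split each entry
  have step1 : Ddet n d u v
      = (∏ j : Fin d, mu n (u last + 1) n (v j)) * Matrix.det B := by
    unfold Ddet
    have : (Matrix.of fun i j : Fin d => mu n (u i + 1) n (v j))
        = Matrix.of fun i j : Fin d =>
            mu n (u last + 1) n (v j) * B i j := by
      ext i j
      simp only [Matrix.of_apply, hB]
      rw [mu_split_s11 n (u i + 1) (u last) n (v j) (by omega)
        (by have := hile i; omega) (hun last), mul_comm]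
    rw [this, Matrix.det_mul_row]
  -- the equivalence Fin (d-1) ⊕ Fin 1 ≃ Fin d
  have hd1 : d - 1 + 1 = d := by omega
  let e : Fin (d - 1) ⊕ Fin 1 ≃ Fin d := finSumFinEquiv.trans (finCongr hd1)
  have he1 : ∀ i : Fin (d - 1), e (Sum.inl i) = em i := by
    intro i
    apply Fin.ext
    simp [e, hem i]
  have he2 : ∀ j : Fin 1, e (Sum.inr j) = last := by
    intro j
    apply Fin.ext
    simp [e, hlast, Fin.val_eq_zero j]
  -- Step 2: block decomposition
  have hBlast : ∀ j : Fin d, B last j = 1 := by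
    intro j
    simp only [hB, Matrix.of_apply]
    exact mu_empty n (u last + 1) (u last) (v j) (by omega)
  have step2 : Matrix.det B
      = Matrix.det A * ∏ j : Fin (d - 1), (eps n (v last) - eps n (v (em j))) := by
    rw [← Matrix.det_submatrix_equiv_self e B]
    have hblocks : B.submatrix e e
        = Matrix.fromBlocks
            (Matrix.of fun i j : Fin (d - 1) => B (em i) (em j))
            (Matrix.of fun (i : Fin (d - 1)) (_ : Fin 1) => B (em i) last)
            (Matrix.of fun (_ : Fin 1) (j : Fin (d - 1)) => (1 : MvPolynomial (Fin n) ℤ))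
            (1 : Matrix (Fin 1) (Fin 1) (MvPolynomial (Fin n) ℤ)) := by
      ext i j
      cases i with
      | inl i =>
        cases j with
        | inl j => simp [he1]
        | inr j => simp [he1, he2]
      | inr i =>
        cases j with
        | inl j => simp [he1, he2, hBlast]
        | inr j =>
          simp [he2, hBlast, Matrix.one_apply, Subsingleton.elim i j]
    rw [hblocks, Matrix.det_fromBlocks_one₂₂]
    have hmin : (Matrix.of fun i j : Fin (d - 1) => B (em i) (em j))
          - (Matrix.of fun (i : Fin (d - 1)) (_ : Fin 1) => B (em i) last)
            * (Matrix.of fun (_ : Fin 1) (j : Fin (d - 1)) => (1 : MvPolynomial (Fin n) ℤ))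
        = Matrix.of fun i j : Fin (d - 1) =>
            (eps n (v last) - eps n (v (em j))) * A i j := by
      ext i j
      simp only [Matrix.sub_apply, Matrix.mul_apply, Matrix.of_apply, Fin.sum_univ_one,
        mul_one]
      rw [part1 i j]
      simp [hB]
    rw [hmin, Matrix.det_mul_row]
    ring
  rw [step1, step2]
  ring
end
end

section
/- Value of the restriction determinant on the diagonal: for every v ∈ I(d,n), D(v,v) = VDM(v) · ∏_{(r,c) ∈ pos^v} (ε_r − ε_c) in R, where pos^v := {(r,c) : 1 ≤ c < r ≤ n, c ∈ v, r ∉ v}; in particular D(v,v) ≠ 0. -/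
noncomputable section

/-- `pos^v = {(r,c) : 1 ≤ c < r ≤ n, c ∈ v, r ∉ v}`, where `v` is identified with a
subset of `{1, …, n}`. -/
def posv (n d : ℕ) (v : Fin d → ℕ) : Finset (ℕ × ℕ) :=
  ((Finset.Icc 1 n) ×ˢ (Finset.Icc 1 n)).filter
    (fun p => p.2 < p.1 ∧ (∃ i, v i = p.2) ∧ ¬ ∃ i, v i = p.1)

lemma eps_sub_ne_zero (n a b : ℕ) (ha : 1 ≤ a) (han : a ≤ n) (hb : 1 ≤ b)
    (hbn : b ≤ n) (hab : a ≠ b) : eps n a - eps n b ≠ 0 := by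
  rw [sub_ne_zero, eps, eps, dif_pos ⟨ha, han⟩, dif_pos ⟨hb, hbn⟩]
  intro h
  have := MvPolynomial.X_injective h
  apply hab
  have : a - 1 = b - 1 := congrArg Fin.val this
  omega

/-- Value of the restriction determinant on the diagonal: for every `v ∈ I(d,n)`,
`D(v,v) = VDM(v) · ∏_{(r,c) ∈ pos^v} (ε_r − ε_c)`; in particular `D(v,v) ≠ 0`. -/
theorem Ddet_diagonal (n d : ℕ) (hd : 1 ≤ d) (hdn : d ≤ n) (v : Fin d → ℕ)
    (hv : StrictMono v) (hv1 : ∀ i, 1 ≤ v i) (hvn : ∀ i, v i ≤ n) :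
    Ddet n d v v = vdm n d v * ∏ p ∈ posv n d v, (eps n p.1 - eps n p.2) ∧
      Ddet n d v v ≠ 0 := by
  have hdiag : Ddet n d v v = ∏ i, mu n (v i + 1) n (v i) := by
    rw [Ddet, Matrix.det_of_lowerTriangular]
    · rfl
    · intro i j hij
      simp only [OrderDual.toDual_lt_toDual] at hij
      show mu n (v i + 1) n (v j) = 0
      apply Finset.prod_eq_zero (i := v j)
      · rw [Finset.mem_Icc]
        exact ⟨hv hij, hvn j⟩
      · simp
  -- split each mu into the "in v" part and "not in v" part
  have hsplit : ∀ i : Fin d, mu n (v i + 1) n (v i) =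
      (∏ t ∈ (Finset.Icc (v i + 1) n).filter (fun t => ∃ j, v j = t),
        (eps n t - eps n (v i))) *
      (∏ t ∈ (Finset.Icc (v i + 1) n).filter (fun t => ¬ ∃ j, v j = t),
        (eps n t - eps n (v i))) := by
    intro i
    rw [mu, Finset.prod_filter_mul_prod_filter_not]
  have hA : (∏ i : Fin d, ∏ t ∈ (Finset.Icc (v i + 1) n).filter (fun t => ∃ j, v j = t),
      (eps n t - eps n (v i))) = vdm n d v := by
    have himg : ∀ i : Fin d, (Finset.Icc (v i + 1) n).filter (fun t => ∃ j, v j = t)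
        = (Finset.univ.filter (fun j : Fin d => i < j)).image v := by
      intro i
      ext t
      simp only [Finset.mem_filter, Finset.mem_Icc, Finset.mem_image, Finset.mem_univ,
        true_and]
      constructor
      · rintro ⟨⟨h1, h2⟩, j, rfl⟩
        exact ⟨j, hv.lt_iff_lt.mp (by omega), rfl⟩
      · rintro ⟨j, hj, rfl⟩
        exact ⟨⟨hv hj, hvn j⟩, j, rfl⟩
    calc (∏ i : Fin d, ∏ t ∈ (Finset.Icc (v i + 1) n).filter (fun t => ∃ j, v j = t),
        (eps n t - eps n (v i)))
        = ∏ i : Fin d, ∏ j ∈ Finset.univ.filter (fun j : Fin d => i < j),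
            (eps n (v j) - eps n (v i)) := by
          refine Finset.prod_congr rfl fun i _ => ?_
          rw [himg i, Finset.prod_image]
          intro a _ b _ hab
          exact hv.injective hab
      _ = vdm n d v := by
          rw [vdm, Finset.prod_sigma']
          refine Finset.prod_bij (fun x _ => (x.1, x.2)) ?_ ?_ ?_ ?_
          · rintro ⟨i, j⟩ hx
            simp only [Finset.mem_sigma, Finset.mem_filter, Finset.mem_univ, true_and] at hx ⊢
            exact hx
          · rintro ⟨i, j⟩ _ ⟨i', j'⟩ _ h
            simp only [Prod.mk.injEq] at h
            exact Sigma.ext h.1 (heq_of_eq h.2)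
          · rintro ⟨i, j⟩ hp
            simp only [Finset.mem_filter, Finset.mem_univ, true_and] at hp
            exact ⟨⟨i, j⟩, by simp [hp], rfl⟩
          · intros; rfl
  have hB : (∏ i : Fin d, ∏ t ∈ (Finset.Icc (v i + 1) n).filter (fun t => ¬ ∃ j, v j = t),
      (eps n t - eps n (v i))) = ∏ p ∈ posv n d v, (eps n p.1 - eps n p.2) := by
    rw [Finset.prod_sigma']
    refine Finset.prod_bij (fun x _ => (x.2, v x.1)) ?_ ?_ ?_ ?_
    · rintro ⟨i, t⟩ hx
      simp only [Finset.mem_sigma, Finset.mem_univ, Finset.mem_filter, Finset.mem_Icc,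
        true_and] at hx
      obtain ⟨⟨h1, h2⟩, h3⟩ := hx
      simp only [posv, Finset.mem_filter, Finset.mem_product, Finset.mem_Icc]
      refine ⟨⟨⟨by omega, h2⟩, ⟨hv1 i, hvn i⟩⟩, by omega, ⟨i, rfl⟩, h3⟩
    · rintro ⟨i, t⟩ _ ⟨i', t'⟩ _ h
      simp only [Prod.mk.injEq] at h
      exact Sigma.ext (hv.injective h.2) (heq_of_eq h.1)
    · rintro ⟨r, c⟩ hp
      simp only [posv, Finset.mem_filter, Finset.mem_product, Finset.mem_Icc] at hp
      obtain ⟨⟨⟨hr1, hrn⟩, hc1, hcn⟩, hcr, ⟨i, hi⟩, hnr⟩ := hp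
      refine ⟨⟨i, r⟩, ?_, by simp [hi]⟩
      simp only [Finset.mem_sigma, Finset.mem_univ, Finset.mem_filter, Finset.mem_Icc, true_and]
      exact ⟨⟨by omega, hrn⟩, hnr⟩
    · intros; rfl
  have hmain : Ddet n d v v = vdm n d v * ∏ p ∈ posv n d v, (eps n p.1 - eps n p.2) := by
    rw [hdiag, Finset.prod_congr rfl (fun i _ => hsplit i), Finset.prod_mul_distrib, hA, hB]
  refine ⟨hmain, ?_⟩
  rw [hdiag]
  apply Finset.prod_ne_zero_iff.mpr
  intro i _
  rw [mu]
  apply Finset.prod_ne_zero_iff.mpr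
  intro t ht
  rw [Finset.mem_Icc] at ht
  exact eps_sub_ne_zero n t (v i) (by have := hv1 i; omega) ht.2 (hv1 i) (hvn i) (by omega)
end
end

section
/- Integrality of the restriction: for all u, v ∈ I(d,n), the Vandermonde product VDM(v) divides D(u,v) in the polynomial ring R = ℤ[ε_1,…,ε_n]; equivalently, E(u,v) := D(u,v)/VDM(v) is a polynomial. -/
noncomputable section

/-!
The factors `ε_{v_j} - ε_{v_i}` of `VDM(v)` are pairwise non-associated primes of `ℤ[ε]`, so it
suffices that each of them divides `D(u,v)`. Modulo `ε_{v_j} - ε_{v_i}`, i.e. after substituting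
`ε_{v_j}` for `ε_{v_i}`, columns `i` and `j` of the matrix defining `D(u,v)` coincide, so the
determinant vanishes there.
-/

open Function MvPolynomial

namespace MvPolynomial

variable {σ R : Type*} [CommRing R]

theorem prime_X_sub_X [IsDomain R] [DecidableEq σ] {a b : σ} (hab : a ≠ b) :
    Prime (X a - X b : MvPolynomial σ R) := by
  let ψ : MvPolynomial σ R ≃ₐ[R] Polynomial (MvPolynomial {i // i ≠ b} R) :=
    (renameEquiv R (Equiv.optionSubtypeNe b)).symm.trans (optionEquivLeft R _)
  have hψ : ψ (X a - X b) = -(Polynomial.X - Polynomial.C (X ⟨a, hab⟩)) := by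
    simp only [ψ, map_sub, AlgEquiv.trans_apply, renameEquiv_symm, renameEquiv_apply, rename_X,
      Equiv.optionSubtypeNe_symm_of_ne hab, Equiv.optionSubtypeNe_symm_self,
      optionEquivLeft_X_some, optionEquivLeft_X_none]
    ring
  rw [← MulEquiv.prime_iff ψ, hψ]
  exact (Polynomial.prime_X_sub_C _).neg

theorem not_X_sub_X_dvd_X_sub_X [Nontrivial R] {a b c d : σ} (hca : c ≠ a) (hcb : c ≠ b)
    (hcd : c ≠ d) : ¬ (X a - X b : MvPolynomial σ R) ∣ X c - X d := by
  classical
  intro h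
  have := map_dvd (eval fun i => if i = c then (1 : R) else 0) h
  simp [hca.symm, hcb.symm, hcd.symm] at this

theorem pairwise_isRelPrime_X_sub_X [IsDomain R] {ι : Type*} [LinearOrder ι] {w : ι → σ}
    (hw : Injective w) :
    {p : ι × ι | p.1 < p.2}.Pairwise
      (IsRelPrime on fun p : ι × ι ↦ (X (w p.2) - X (w p.1) : MvPolynomial σ R)) := by
  classical
  rintro ⟨i, j⟩ (hij : i < j) ⟨k, l⟩ (hkl : k < l) hne
  refine ((prime_X_sub_X (hw.ne hij.ne')).irreducible.isRelPrime_iff_not_dvd).2 ?_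
  show ¬_ ∣ X (w l) - X (w k)
  by_cases hl : l ≠ i ∧ l ≠ j
  · exact not_X_sub_X_dvd_X_sub_X (hw.ne hl.2) (hw.ne hl.1) (hw.ne hkl.ne')
  by_cases hk : k ≠ i ∧ k ≠ j
  · rw [← neg_sub (X (w k)), dvd_neg]
    exact not_X_sub_X_dvd_X_sub_X (hw.ne hk.2) (hw.ne hk.1) (hw.ne hkl.ne)
  -- now `k, l ∈ {i, j}` with `k < l`, forcing `(k, l) = (i, j)`
  grind

theorem X_sub_X_dvd_of_aeval_update_eq_zero [DecidableEq σ] {a b : σ} {f : MvPolynomial σ R}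
    (hf : aeval (update X b (X a) : σ → MvPolynomial σ R) f = 0) :
    (X a - X b : MvPolynomial σ R) ∣ f := by
  set I := Ideal.span {(X a - X b : MvPolynomial σ R)}
  have hmod : (Ideal.Quotient.mkₐ R I).comp (aeval (update X b (X a) : σ → MvPolynomial σ R)) =
      Ideal.Quotient.mkₐ R I := by
    refine algHom_ext fun i => ?_
    rcases eq_or_ne i b with rfl | hib
    · simp [Ideal.Quotient.eq, I]
    · simp [hib]
  rw [← Ideal.mem_span_singleton, ← Ideal.Quotient.eq_zero_iff_mem]
  have hfI := DFunLike.congr_fun hmod f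
  rw [AlgHom.comp_apply, hf, map_zero] at hfI
  exact hfI.symm

end MvPolynomial

theorem eps_of_mem {n j : ℕ} (h1 : 1 ≤ j) (hn : j ≤ n) : eps n j = X ⟨j - 1, by omega⟩ :=
  dif_pos ⟨h1, hn⟩

theorem map_mu_congr {n : ℕ} {S : Type*} [CommRing S] (φ : MvPolynomial (Fin n) ℤ →+* S)
    {p q : ℕ} (h : φ (eps n p) = φ (eps n q)) (k r : ℕ) : φ (mu n k r p) = φ (mu n k r q) := by
  simp only [mu, map_prod, map_sub, h]

theorem map_Ddet_eq_zero {n d : ℕ} {S : Type*} [CommRing S] (φ : MvPolynomial (Fin n) ℤ →+* S)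
    {u v : Fin d → ℕ} {i j : Fin d} (hij : i ≠ j) (h : φ (eps n (v i)) = φ (eps n (v j))) :
    φ (Ddet n d u v) = 0 := by
  rw [Ddet, RingHom.map_det]
  exact Matrix.det_zero_of_column_eq hij fun k => map_mu_congr φ h _ _

theorem vdm_dvd_Ddet_general (n d : ℕ) (u v : Fin d → ℕ)
    (hv : StrictMono v) (hv1 : ∀ i, 1 ≤ v i) (hvn : ∀ i, v i ≤ n) :
    vdm n d v ∣ Ddet n d u v := by
  classical
  let w : Fin d → Fin n := fun i => ⟨v i - 1, by have := hv1 i; have := hvn i; omega⟩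
  have hw : Injective w := fun i j hij => hv.injective <| by
    have := hv1 i; have := hv1 j; have := congrArg Fin.val hij; simp only [w] at this; omega
  have heps : ∀ i, eps n (v i) = X (w i) := fun i => eps_of_mem (hv1 i) (hvn i)
  simp only [vdm, heps]
  refine Finset.prod_dvd_of_isRelPrime ?_ fun p hp => ?_
  · simpa using (pairwise_isRelPrime_X_sub_X (R := ℤ) hw)
  · have hlt : p.1 < p.2 := (Finset.mem_filter.mp hp).2
    exact X_sub_X_dvd_of_aeval_update_eq_zero
      (map_Ddet_eq_zero (aeval _).toRingHom hlt.ne (by simp [heps, hw.ne hlt.ne']))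

/-- Integrality of the restriction: for all `u, v ∈ I(d,n)` (strictly increasing `d`-tuples
of integers from `{1, …, n}`), the Vandermonde product `VDM(v)` divides `D(u,v)` in
`R = ℤ[ε_1, …, ε_n]`. -/
theorem vdm_dvd_Ddet (n d : ℕ) (hd : 1 ≤ d) (hdn : d ≤ n) (u v : Fin d → ℕ)
    (hu : StrictMono u) (hu1 : ∀ i, 1 ≤ u i) (hun : ∀ i, u i ≤ n)
    (hv : StrictMono v) (hv1 : ∀ i, 1 ≤ v i) (hvn : ∀ i, v i ≤ n) :
    vdm n d v ∣ Ddet n d u v :=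
  vdm_dvd_Ddet_general n d u v hv hv1 hvn

end
end

section
/- Vanishing of the restriction determinant off the Bruhat order: for u, v ∈ I(d,n), if there exists an index i with u_i < v_i, then D(u,v) = 0 in R. -/
noncomputable section

/-- Vanishing of the restriction determinant off the Bruhat order: for
`u, v ∈ I(d,n)`, if there exists an index `i` with `u_i < v_i`, then `D(u,v) = 0`. -/
theorem Ddet_eq_zero_of_not_le (n d : ℕ) (hd : 1 ≤ d) (hdn : d ≤ n) (u v : Fin d → ℕ)
    (hu : StrictMono u) (hu1 : ∀ i, 1 ≤ u i) (hun : ∀ i, u i ≤ n)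
    (hv : StrictMono v) (hv1 : ∀ i, 1 ≤ v i) (hvn : ∀ i, v i ≤ n)
    (h : ∃ i, u i < v i) :
    Ddet n d u v = 0 := by
  obtain ⟨i₀, hi₀⟩ := h
  unfold Ddet
  rw [Matrix.det_apply']
  apply Finset.sum_eq_zero
  intro σ _
  have hex : ∃ i : Fin d, i₀ ≤ i ∧ σ i ≤ i₀ := by
    by_contra hcon
    push_neg at hcon
    have hmap : ∀ i ∈ Finset.Ici i₀, σ i ∈ Finset.Ioi i₀ := fun i hi =>
      Finset.mem_Ioi.mpr (hcon i (Finset.mem_Ici.mp hi))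
    have hcard := Finset.card_le_card_of_injOn σ hmap
      (fun a _ b _ hab => σ.injective hab)
    rw [Fin.card_Ici, Fin.card_Ioi] at hcard
    omega
  obtain ⟨i, hii, hσi⟩ := hex
  have hz : mu n (u (σ i) + 1) n (v i) = 0 := by
    have h1 : u (σ i) ≤ u i₀ := hu.monotone hσi
    have h2 : v i₀ ≤ v i := hv.monotone hii
    apply Finset.prod_eq_zero (i := v i)
    · exact Finset.mem_Icc.mpr ⟨by omega, hvn i⟩
    · simp
  have : (∏ j, (Matrix.of fun i j : Fin d => mu n (u i + 1) n (v j)) (σ j) j) = 0 := by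
    apply Finset.prod_eq_zero (Finset.mem_univ i)
    simpa using hz
  rw [this]; exact mul_zero _
end
end
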